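/- arXiv:1401.5584 — 3 statements merged into one kernel-verified Lean document; each statement's English description precedes it below -/
import Mathlib

section
/- Let f₀, …, fₙ be tropical units (continuous piecewise linear functions R → R with ω = 0 everywhere, i.e., affine functions) such that f_i − f_j is nonconstant for all i ≠ j. Then f₀, …, fₙ are linearly independent in the Gondran–Minoux sense: there do not exist disjoint sets I, J with I ∪ J = {0,…,n} and constants α₀,…,αₙ ∈ R ∪ {-∞}, not all -∞, such that max_{i∈I}(α_i + f_i(t)) = max_{j∈J}(α_j + f_j(t)) for all t ∈ R. -/
open Set Filter

/-- A tropical meromorphic function: a continuous piecewise linear real function, i.e.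
a continuous function that is affine on a one-sided neighbourhood of every point. -/
def TropMero (f : ℝ → ℝ) : Prop :=
  Continuous f ∧ ∀ x : ℝ, ∃ ε > (0 : ℝ),
    (∃ a b : ℝ, ∀ y ∈ Set.Ico x (x + ε), f y = a * y + b) ∧
    (∃ a b : ℝ, ∀ y ∈ Set.Ioc (x - ε) x, f y = a * y + b)

/-- `ω_f(x)`: the jump of the derivative of `f` at `x` (right slope minus left slope).
`x` is a root of `f` if `ω_f(x) > 0` and a pole if `ω_f(x) < 0`. -/
noncomputable def omega (f : ℝ → ℝ) (x : ℝ) : ℝ :=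
  derivWithin f (Set.Ici x) x - derivWithin f (Set.Iic x) x

/-- A tropical entire function: a tropical meromorphic function without poles,
equivalently a convex one. -/
def TropEntire (f : ℝ → ℝ) : Prop := TropMero f ∧ ConvexOn ℝ Set.univ f

/-- The tropical proximity function `m(r, f) = (f⁺(r) + f⁺(-r))/2`. -/
noncomputable def mProx (f : ℝ → ℝ) (r : ℝ) : ℝ := (max (f r) 0 + max (f (-r)) 0) / 2

/-- The unintegrated counting function `n(t, f) = Σ_{|s| ≤ t, ω_f(s) < 0} |ω_f(s)|`. -/
noncomputable def nCount (f : ℝ → ℝ) (t : ℝ) : ℝ :=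
  ∑ᶠ s ∈ {s : ℝ | |s| ≤ t ∧ omega f s < 0}, |omega f s|

/-- The tropical counting function `N(r, f) = (1/2) ∫₀^r n(t, f) dt`. -/
noncomputable def NCount (f : ℝ → ℝ) (r : ℝ) : ℝ := (1 / 2) * ∫ t in (0 : ℝ)..r, nCount f t

/-- The tropical Nevanlinna characteristic `T(r, f) = m(r, f) + N(r, f)`. -/
noncomputable def Tchar (f : ℝ → ℝ) (r : ℝ) : ℝ := mProx f r + NCount f r

/-- Gondran–Minoux linear dependence over the max-plus semiring: `{0, …, n}` splits into
two disjoint index sets `I`, `J` such that `max_{i ∈ I} (α_i + f_i)` and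
`max_{j ∈ J} (α_j + f_j)` agree identically, with coefficients `α_i ∈ ℝ ∪ {-∞}`
not all `-∞` (the maximum over an empty index set being `-∞ = ⊥`). -/
def GondranMinouxDependent (n : ℕ) (f : Fin (n + 1) → ℝ → ℝ) : Prop :=
  ∃ (I J : Finset (Fin (n + 1))) (α : Fin (n + 1) → WithBot ℝ),
    Disjoint I J ∧ I ∪ J = Finset.univ ∧ (∃ i, α i ≠ ⊥) ∧
    ∀ t : ℝ, (I.sup fun i => α i + ((f i t : ℝ) : WithBot ℝ)) =
             (J.sup fun j => α j + ((f j t : ℝ) : WithBot ℝ))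

/-- Eventually, the dominant-slope term beats the whole sup on the other side. -/
lemma tropAux {m : ℕ} (a b : Fin m → ℝ) (α : Fin m → WithBot ℝ)
    (J : Finset (Fin m)) (i : Fin m) (c : ℝ)
    (hs : ∀ j ∈ J, α j ≠ ⊥ → a j < a i) :
    ∃ t : ℝ, (J.sup fun j => α j + ((a j * t + b j : ℝ) : WithBot ℝ)) <
      ((c + (a i * t + b i) : ℝ) : WithBot ℝ) := by
  have h : ∀ j ∈ J, ∀ᶠ t : ℝ in atTop,
      α j + ((a j * t + b j : ℝ) : WithBot ℝ) < ((c + (a i * t + b i) : ℝ) : WithBot ℝ) := by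
    intro j hj
    rcases eq_or_ne (α j) ⊥ with h0 | h0
    · filter_upwards with t
      rw [h0, WithBot.bot_add]
      exact WithBot.bot_lt_coe _
    · obtain ⟨cj, hcj⟩ := WithBot.ne_bot_iff_exists.mp h0
      have hlt := hs j hj h0
      have htend : Tendsto (fun t : ℝ => (c + (a i * t + b i)) - (cj + (a j * t + b j)))
          atTop atTop := by
        have hfun : (fun t : ℝ => (c + (a i * t + b i)) - (cj + (a j * t + b j)))
            = fun t => (a i - a j) * t + (c + b i - cj - b j) := by
          funext t; ring
        rw [hfun]
        exact tendsto_atTop_add_const_right atTop _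
          (Tendsto.const_mul_atTop (sub_pos.mpr hlt) tendsto_id)
      filter_upwards [htend.eventually_gt_atTop 0] with t ht
      rw [← hcj, ← WithBot.coe_add, WithBot.coe_lt_coe]
      linarith
  obtain ⟨t, ht⟩ := (J.eventually_all.mpr h).exists
  exact ⟨t, (Finset.sup_lt_iff (WithBot.bot_lt_coe _)).mpr ht⟩

/-- If one side has a non-bot coefficient, so does the other. -/
lemma tropSupp {m : ℕ} (a b : Fin m → ℝ) (α : Fin m → WithBot ℝ) (I J : Finset (Fin m))
    (heq : ∀ t : ℝ, (I.sup fun i => α i + ((a i * t + b i : ℝ) : WithBot ℝ)) =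
                    (J.sup fun j => α j + ((a j * t + b j : ℝ) : WithBot ℝ)))
    (i : Fin m) (hiI : i ∈ I) (hib : α i ≠ ⊥) : ∃ j ∈ J, α j ≠ ⊥ := by
  by_contra h
  push_neg at h
  have hJ : (J.sup fun j => α j + ((a j * 0 + b j : ℝ) : WithBot ℝ)) = ⊥ := by
    apply (Finset.sup_eq_bot_iff _ _).mpr
    intro j hj
    simp [h j hj]
  have hle := Finset.le_sup (f := fun i => α i + ((a i * 0 + b i : ℝ) : WithBot ℝ)) hiI
  rw [heq 0, hJ, le_bot_iff, WithBot.add_eq_bot] at hle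
  rcases hle with h1 | h1
  · exact hib h1
  · exact (WithBot.coe_ne_bot h1)

/-- Tropical Borel lemma: if `f₀, …, fₙ` are tropical units (tropical meromorphic
functions with `ω ≡ 0`, i.e. affine functions) such that `f_i − f_j` is nonconstant
for all `i ≠ j`, then `f₀, …, fₙ` are linearly independent in the Gondran–Minoux sense. -/
theorem tropical_units_gondranMinoux_independent (n : ℕ) (f : Fin (n + 1) → ℝ → ℝ)
    (hunit : ∀ i, ∃ α β : ℝ, ∀ t, f i t = α * t + β)
    (hnc : ∀ i j, i ≠ j → ¬ ∃ C : ℝ, ∀ t, f i t - f j t = C) :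
    ¬ GondranMinouxDependent n f := by
  classical
  rintro ⟨I, J, α, hdisj, hunion, ⟨i0, hi0⟩, heq⟩
  choose a b hab using hunit
  simp only [hab] at heq
  have hslope : ∀ i j : Fin (n + 1), i ≠ j → a i ≠ a j := by
    intro i j hij hcon
    exact hnc i j hij ⟨b i - b j, fun t => by rw [hab, hab, hcon]; ring⟩
  -- both supports are nonempty
  have hi0' : i0 ∈ I ∪ J := hunion ▸ Finset.mem_univ i0
  have hboth : (∃ i ∈ I, α i ≠ ⊥) ∧ (∃ j ∈ J, α j ≠ ⊥) := by
    rcases Finset.mem_union.mp hi0' with h | h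
    · exact ⟨⟨i0, h, hi0⟩, tropSupp a b α I J heq i0 h hi0⟩
    · exact ⟨tropSupp a b α J I (fun t => (heq t).symm) i0 h hi0, ⟨i0, h, hi0⟩⟩
  obtain ⟨⟨i1, hi1I, hi1⟩, ⟨j1, hj1J, hj1⟩⟩ := hboth
  -- the index of maximal slope among those with non-bot coefficient
  set S : Finset (Fin (n + 1)) := Finset.univ.filter (fun i => α i ≠ ⊥) with hS
  have hSne : S.Nonempty := ⟨i1, by simp [hS, hi1]⟩
  obtain ⟨im, himS, hmax⟩ := S.exists_max_image a hSne
  have himb : α im ≠ ⊥ := (Finset.mem_filter.mp himS).2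
  obtain ⟨c, hc⟩ := WithBot.ne_bot_iff_exists.mp himb
  have him : im ∈ I ∪ J := hunion ▸ Finset.mem_univ im
  have key : ∀ (K : Finset (Fin (n + 1))), im ∉ K →
      ∀ j ∈ K, α j ≠ ⊥ → a j < a im := by
    intro K himK j hj hjb
    have hjS : j ∈ S := Finset.mem_filter.mpr ⟨Finset.mem_univ j, hjb⟩
    have hne : j ≠ im := fun h => himK (h ▸ hj)
    exact lt_of_le_of_ne (hmax j hjS) (hslope j im hne)
  rcases Finset.mem_union.mp him with hmI | hmJ
  · have hmJ' : im ∉ J := Finset.disjoint_left.mp hdisj hmI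
    obtain ⟨t, ht⟩ := tropAux a b α J im c (key J hmJ')
    have hle : α im + ((a im * t + b im : ℝ) : WithBot ℝ) ≤
        I.sup fun i => α i + ((a i * t + b i : ℝ) : WithBot ℝ) :=
      Finset.le_sup (f := fun i => α i + ((a i * t + b i : ℝ) : WithBot ℝ)) hmI
    rw [← hc, ← WithBot.coe_add, heq t] at hle
    exact absurd (lt_of_le_of_lt hle ht) (lt_irrefl _)
  · have hmI' : im ∉ I := Finset.disjoint_right.mp hdisj hmJ
    obtain ⟨t, ht⟩ := tropAux a b α I im c (key I hmI')
    have hle : α im + ((a im * t + b im : ℝ) : WithBot ℝ) ≤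
        J.sup fun j => α j + ((a j * t + b j : ℝ) : WithBot ℝ) :=
      Finset.le_sup (f := fun j => α j + ((a j * t + b j : ℝ) : WithBot ℝ)) hmJ
    rw [← hc, ← WithBot.coe_add, ← heq t] at hle
    exact absurd (lt_of_le_of_lt hle ht) (lt_irrefl _)
end

section
/- Every tropical meromorphic function f : R → R can be written as f = h − g where g, h : R → R are tropical entire functions (continuous convex piecewise linear functions) with no common roots. -/
open Set Filter

/-!
Put `g = ∑ₛ ω_f(s)⁻ · hinge s`, a locally finite sum of hinges with kinks at the poles of `f`
weighted by their multiplicities, and `h = f + g`. Both are piecewise linear, with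
`ω_g = ω_f⁻ ≥ 0` and `ω_h = ω_f + ω_f⁻ = ω_f⁺ ≥ 0`, so they have no common roots. A piecewise
linear function with `ω ≥ 0` everywhere is convex: subtract a chord over `[p, q]`; at the
rightmost point where the difference attains a positive maximum, its right slope would be
negative and its left slope nonnegative, i.e. `ω < 0` there.
-/

open Topology

section Germs

variable {f g : ℝ → ℝ} {x : ℝ}

theorem tropMero_iff : TropMero f ↔ Continuous f ∧ ∀ x,
    (∃ a b : ℝ, f =ᶠ[𝓝[≥] x] fun y => a * y + b) ∧
      ∃ a b : ℝ, f =ᶠ[𝓝[≤] x] fun y => a * y + b := by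
  refine and_congr_right fun _ => forall_congr' fun x => ⟨?_, ?_⟩
  · rintro ⟨ε, hε, ⟨a₁, b₁, h₁⟩, a₂, b₂, h₂⟩
    exact ⟨⟨a₁, b₁, eventually_of_mem (Ico_mem_nhdsGE (by linarith)) h₁⟩,
      a₂, b₂, eventually_of_mem (Ioc_mem_nhdsLE (by linarith)) h₂⟩
  · rintro ⟨⟨a₁, b₁, h₁⟩, a₂, b₂, h₂⟩
    obtain ⟨u, hxu, hu⟩ := mem_nhdsGE_iff_exists_Ico_subset.1 h₁
    obtain ⟨l, hlx, hl⟩ := mem_nhdsLE_iff_exists_Ioc_subset.1 h₂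
    have hεu := min_le_left (u - x) (x - l)
    have hεl := min_le_right (u - x) (x - l)
    refine ⟨min (u - x) (x - l), lt_min (sub_pos.2 hxu) (sub_pos.2 hlx),
      ⟨a₁, b₁, fun y hy => hu ⟨hy.1, ?_⟩⟩, a₂, b₂, fun y hy => hl ⟨?_, hy.2⟩⟩
    · linarith [hy.2]
    · linarith [hy.1]

theorem hasDerivWithinAt_of_eventuallyEq_affine {s : Set ℝ} {a b : ℝ}
    (h : f =ᶠ[𝓝[s] x] fun y => a * y + b) (hx : x ∈ s) : HasDerivWithinAt f a s x := by
  have hℓ : HasDerivAt (fun y => a * y + b) a x := by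
    simpa using ((hasDerivAt_id x).const_mul a).add_const b
  exact hℓ.hasDerivWithinAt.congr_of_eventuallyEq_of_mem h hx

theorem omega_eq_of_eventuallyEq {a₁ b₁ a₂ b₂ : ℝ}
    (h₁ : f =ᶠ[𝓝[≥] x] fun y => a₁ * y + b₁) (h₂ : f =ᶠ[𝓝[≤] x] fun y => a₂ * y + b₂) :
    omega f x = a₁ - a₂ := by
  rw [omega, (hasDerivWithinAt_of_eventuallyEq_affine h₁ self_mem_Ici).derivWithin
    (uniqueDiffWithinAt_Ici x), (hasDerivWithinAt_of_eventuallyEq_affine h₂ self_mem_Iic).derivWithin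
    (uniqueDiffWithinAt_Iic x)]

theorem omega_eq_zero_of_eventuallyEq {a b : ℝ} (h : f =ᶠ[𝓝 x] fun y => a * y + b) :
    omega f x = 0 := by
  rw [omega_eq_of_eventuallyEq (h.filter_mono nhdsWithin_le_nhds)
    (h.filter_mono nhdsWithin_le_nhds), sub_self]

theorem omega_congr (h : f =ᶠ[𝓝 x] g) : omega f x = omega g x := by
  rw [omega, omega, (h.filter_mono nhdsWithin_le_nhds).derivWithin_eq h.eq_of_nhds,
    (h.filter_mono nhdsWithin_le_nhds).derivWithin_eq h.eq_of_nhds]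

theorem omega_const_mul (c : ℝ) : omega (fun y => c * f y) x = c * omega f x := by
  simp only [omega, derivWithin_const_mul_field, mul_sub]

theorem tropMero_affine (a b : ℝ) : TropMero fun y => a * y + b :=
  tropMero_iff.2 ⟨by fun_prop, fun _ => ⟨⟨a, b, .rfl⟩, a, b, .rfl⟩⟩

theorem omega_affine (a b : ℝ) : omega (fun y => a * y + b) x = 0 :=
  omega_eq_zero_of_eventuallyEq .rfl

end Germs

namespace TropMero

variable {f g : ℝ → ℝ}

theorem differentiableWithinAt_Ici (hf : TropMero f) (x : ℝ) :
    DifferentiableWithinAt ℝ f (Ici x) x :=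
  let ⟨_, _, h⟩ := ((tropMero_iff.1 hf).2 x).1
  (hasDerivWithinAt_of_eventuallyEq_affine h self_mem_Ici).differentiableWithinAt

theorem differentiableWithinAt_Iic (hf : TropMero f) (x : ℝ) :
    DifferentiableWithinAt ℝ f (Iic x) x :=
  let ⟨_, _, h⟩ := ((tropMero_iff.1 hf).2 x).2
  (hasDerivWithinAt_of_eventuallyEq_affine h self_mem_Iic).differentiableWithinAt

theorem add (hf : TropMero f) (hg : TropMero g) : TropMero fun y => f y + g y := by
  rw [tropMero_iff] at hf hg ⊢
  refine ⟨hf.1.add hg.1, fun x => ?_⟩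
  obtain ⟨⟨a₁, b₁, hf₁⟩, a₂, b₂, hf₂⟩ := hf.2 x
  obtain ⟨⟨c₁, d₁, hg₁⟩, c₂, d₂, hg₂⟩ := hg.2 x
  refine ⟨⟨a₁ + c₁, b₁ + d₁, ?_⟩, a₂ + c₂, b₂ + d₂, ?_⟩
  · filter_upwards [hf₁, hg₁] with y hfy hgy
    rw [hfy, hgy]; ring
  · filter_upwards [hf₂, hg₂] with y hfy hgy
    rw [hfy, hgy]; ring

theorem const_mul (hf : TropMero f) (c : ℝ) : TropMero fun y => c * f y := by
  rw [tropMero_iff] at hf ⊢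
  refine ⟨continuous_const.mul hf.1, fun x => ?_⟩
  obtain ⟨⟨a₁, b₁, h₁⟩, a₂, b₂, h₂⟩ := hf.2 x
  refine ⟨⟨c * a₁, c * b₁, ?_⟩, c * a₂, c * b₂, ?_⟩
  · filter_upwards [h₁] with y hy
    rw [hy]; ring
  · filter_upwards [h₂] with y hy
    rw [hy]; ring

theorem sum {ι : Type*} {T : Finset ι} {F : ι → ℝ → ℝ} (hF : ∀ i ∈ T, TropMero (F i)) :
    TropMero fun y => ∑ i ∈ T, F i y := by
  classical
  induction T using Finset.induction_on with
  | empty => simpa using tropMero_affine 0 0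
  | insert i T hi ih =>
    simp only [Finset.sum_insert hi]
    exact (hF i (Finset.mem_insert_self i T)).add
      (ih fun j hj => hF j (Finset.mem_insert_of_mem hj))

theorem of_eventuallyEq (h : ∀ x, ∃ F, TropMero F ∧ f =ᶠ[𝓝 x] F) : TropMero f := by
  choose F hF hfF using h
  refine tropMero_iff.2 ⟨continuous_iff_continuousAt.2 fun x =>
    (hF x).1.continuousAt.congr (hfF x).symm, fun x => ?_⟩
  obtain ⟨⟨a₁, b₁, h₁⟩, a₂, b₂, h₂⟩ := (tropMero_iff.1 (hF x)).2 x
  exact ⟨⟨a₁, b₁, ((hfF x).filter_mono nhdsWithin_le_nhds).trans h₁⟩,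
    a₂, b₂, ((hfF x).filter_mono nhdsWithin_le_nhds).trans h₂⟩

theorem omega_add (hf : TropMero f) (hg : TropMero g) (x : ℝ) :
    omega (fun y => f y + g y) x = omega f x + omega g x := by
  change omega (f + g) x = _
  rw [omega, omega, omega, derivWithin_add (hf.differentiableWithinAt_Ici x)
    (hg.differentiableWithinAt_Ici x), derivWithin_add (hf.differentiableWithinAt_Iic x)
    (hg.differentiableWithinAt_Iic x)]
  ring

theorem omega_sum {ι : Type*} {T : Finset ι} {F : ι → ℝ → ℝ} (hF : ∀ i ∈ T, TropMero (F i))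
    (x : ℝ) : omega (fun y => ∑ i ∈ T, F i y) x = ∑ i ∈ T, omega (F i) x := by
  rw [omega, ← Finset.sum_fn, derivWithin_sum fun i hi => (hF i hi).differentiableWithinAt_Ici x,
    derivWithin_sum fun i hi => (hF i hi).differentiableWithinAt_Iic x, ← Finset.sum_sub_distrib]
  rfl

theorem eventually_omega_eq_zero (hf : TropMero f) (x : ℝ) : ∀ᶠ y in 𝓝[≠] x, omega f y = 0 := by
  obtain ⟨⟨a₁, b₁, h₁⟩, a₂, b₂, h₂⟩ := (tropMero_iff.1 hf).2 x
  rw [← nhdsLT_sup_nhdsGT, eventually_sup]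
  constructor
  · filter_upwards [eventually_eventually_nhdsWithin.2
      (h₂.filter_mono (nhdsWithin_mono _ Iio_subset_Iic_self)), self_mem_nhdsWithin] with y hy hyx
    rw [isOpen_Iio.nhdsWithin_eq hyx] at hy
    exact omega_eq_zero_of_eventuallyEq hy
  · filter_upwards [eventually_eventually_nhdsWithin.2
      (h₁.filter_mono (nhdsWithin_mono _ Ioi_subset_Ici_self)), self_mem_nhdsWithin] with y hy hyx
    rw [isOpen_Ioi.nhdsWithin_eq hyx] at hy
    exact omega_eq_zero_of_eventuallyEq hy

theorem finite_omega_ne_zero (hf : TropMero f) {K : Set ℝ} (hK : IsCompact K) :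
    (K ∩ {x | omega f x ≠ 0}).Finite := by
  have hcod : {x | omega f x = 0} ∈ codiscreteWithin K := by
    refine mem_codiscreteWithin.2 fun x _ => disjoint_principal_right.2 ?_
    filter_upwards [hf.eventually_omega_eq_zero x] with y hy
    simp [hy]
  simpa [Set.sdiff_eq, Set.compl_ofPred] using hK.finite_sdiff_of_mem_codiscreteWithin hcod

theorem le_max_of_omega_nonneg (hf : TropMero f) {p q : ℝ}
    (hω : ∀ x ∈ Ioo p q, 0 ≤ omega f x) : ∀ x ∈ Icc p q, f x ≤ max (f p) (f q) := by
  by_contra! ⟨x₀, hx₀, hx₀gt⟩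
  obtain ⟨x₁, hx₁, hmax⟩ := isCompact_Icc.exists_isMaxOn ⟨x₀, hx₀⟩ hf.1.continuousOn
  -- `z` is the largest point where `f` attains its maximum on `[p, q]`
  obtain ⟨z, ⟨hz, hzmax⟩, hzS⟩ := (isCompact_Icc.inter_right
    (isClosed_singleton.preimage hf.1)).exists_isGreatest ⟨x₁, hx₁, rfl⟩
  replace hzmax : f z = f x₁ := hzmax
  have hgt : max (f p) (f q) < f z := hzmax ▸ hx₀gt.trans_le (hmax hx₀)
  have hpz : p < z := hz.1.lt_of_ne (by rintro rfl; exact (le_max_left _ _).not_gt hgt)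
  have hzq : z < q := hz.2.lt_of_ne (by rintro rfl; exact (le_max_right _ _).not_gt hgt)
  obtain ⟨⟨a₁, b₁, h₁⟩, a₂, b₂, h₂⟩ := (tropMero_iff.1 hf).2 z
  have hfz₁ := h₁.eq_of_nhdsWithin self_mem_Ici
  have hfz₂ := h₂.eq_of_nhdsWithin self_mem_Iic
  have ha₁ : a₁ < 0 := by
    obtain ⟨t, ht, hzt, htq⟩ := ((h₁.filter_mono (nhdsWithin_mono _ Ioi_subset_Ici_self)).and
      (Ioc_mem_nhdsGT hzq)).exists
    have hft : f t < f z := (hzmax ▸ hmax ⟨hpz.le.trans hzt.le, htq⟩).lt_of_ne fun h =>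
      hzt.not_ge (hzS ⟨⟨hpz.le.trans hzt.le, htq⟩, h.trans hzmax⟩)
    simp only [ht, hfz₁] at hft
    nlinarith
  have ha₂ : 0 ≤ a₂ := by
    obtain ⟨t, ht, hpt, htz⟩ := ((h₂.filter_mono (nhdsWithin_mono _ Iio_subset_Iic_self)).and
      (Ico_mem_nhdsLT hpz)).exists
    have hft : f t ≤ f z := hzmax ▸ hmax ⟨hpt, htz.le.trans hzq.le⟩
    simp only [ht, hfz₂] at hft
    nlinarith
  have := hω z ⟨hpz, hzq⟩
  rw [omega_eq_of_eventuallyEq h₁ h₂] at this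
  linarith

theorem convexOn_of_omega_nonneg (hf : TropMero f) (hω : ∀ x, 0 ≤ omega f x) :
    ConvexOn ℝ univ f := by
  refine LinearOrder.convexOn_of_lt convex_univ fun p _ q _ hpq a b ha hb hab => ?_
  set c := (f q - f p) / (q - p)
  have hc : c * (q - p) = f q - f p := div_mul_cancel₀ _ (sub_ne_zero.2 hpq.ne')
  -- subtract the chord through `(p, f p)` and `(q, f q)`
  have hφ := hf.add (tropMero_affine (-c) (c * p - f p))
  have hmem : a • p + b • q ∈ Icc p q := by
    rw [smul_eq_mul, smul_eq_mul, show a * p + b * q = p + b * (q - p) by linear_combination p * hab]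
    constructor <;> nlinarith [mul_pos ha (sub_pos.2 hpq), mul_pos hb (sub_pos.2 hpq)]
  have key := hφ.le_max_of_omega_nonneg (fun x _ => by
    rw [hf.omega_add (tropMero_affine _ _), omega_affine, add_zero]; exact hω x) _ hmem
  simp only [smul_eq_mul] at key ⊢
  have hq : f q + (-c * q + (c * p - f p)) = 0 := by linear_combination -hc
  rw [hq, show f p + (-c * p + (c * p - f p)) = 0 by ring, max_self] at key
  linear_combination key + b * hc + (c * p - f p) * hab

end TropMero

/-- `hinge s` vanishes between `0` and `s`, so that sums of hinges over a discrete set of kinks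
are locally finite. -/
noncomputable def hinge (s y : ℝ) : ℝ := if 0 ≤ s then max (y - s) 0 else max (s - y) 0

section Hinge

variable {s x : ℝ}

theorem hinge_eq_zero {y : ℝ} (hy : |y| ≤ |s|) : hinge s y = 0 := by
  unfold hinge
  split_ifs with hs
  · exact max_eq_right (by linarith [le_abs_self y, abs_of_nonneg hs])
  · exact max_eq_right (by linarith [neg_abs_le y, abs_of_neg (not_le.1 hs)])

theorem continuous_hinge (s : ℝ) : Continuous (hinge s) := by
  unfold hinge; split_ifs <;> fun_prop

theorem hinge_eventuallyEq_of_ne (hx : x ≠ s) :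
    ∃ a b : ℝ, hinge s =ᶠ[𝓝 x] fun y => a * y + b := by
  rcases hx.lt_or_gt with hx | hx
  · refine ⟨if 0 ≤ s then 0 else -1, if 0 ≤ s then 0 else s, ?_⟩
    filter_upwards [Iio_mem_nhds hx] with y (hy : y < s)
    unfold hinge; split_ifs <;> simp only [max_def] <;> split_ifs <;> linarith
  · refine ⟨if 0 ≤ s then 1 else 0, if 0 ≤ s then -s else 0, ?_⟩
    filter_upwards [Ioi_mem_nhds hx] with y (hy : s < y)
    unfold hinge; split_ifs <;> simp only [max_def] <;> split_ifs <;> linarith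

theorem exists_hinge_eventuallyEq_self (s : ℝ) : ∃ a₁ b₁ a₂ b₂ : ℝ,
    (hinge s =ᶠ[𝓝[≥] s] fun y => a₁ * y + b₁) ∧ (hinge s =ᶠ[𝓝[≤] s] fun y => a₂ * y + b₂) ∧
      a₁ - a₂ = 1 := by
  refine ⟨if 0 ≤ s then 1 else 0, if 0 ≤ s then -s else 0,
    if 0 ≤ s then 0 else -1, if 0 ≤ s then 0 else s, ?_, ?_, by split_ifs <;> norm_num⟩
  · filter_upwards [self_mem_nhdsWithin] with y (hy : s ≤ y)
    unfold hinge; split_ifs <;> simp only [max_def] <;> split_ifs <;> linarith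
  · filter_upwards [self_mem_nhdsWithin] with y (hy : y ≤ s)
    unfold hinge; split_ifs <;> simp only [max_def] <;> split_ifs <;> linarith

theorem tropMero_hinge (s : ℝ) : TropMero (hinge s) := by
  refine tropMero_iff.2 ⟨continuous_hinge s, fun x => ?_⟩
  obtain rfl | hx := eq_or_ne x s
  · obtain ⟨a₁, b₁, a₂, b₂, h₁, h₂, -⟩ := exists_hinge_eventuallyEq_self x
    exact ⟨⟨a₁, b₁, h₁⟩, a₂, b₂, h₂⟩
  · obtain ⟨a, b, h⟩ := hinge_eventuallyEq_of_ne hx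
    exact ⟨⟨a, b, h.filter_mono nhdsWithin_le_nhds⟩, a, b, h.filter_mono nhdsWithin_le_nhds⟩

theorem omega_hinge : omega (hinge s) x = if x = s then 1 else 0 := by
  split_ifs with hx
  · obtain ⟨a₁, b₁, a₂, b₂, h₁, h₂, h⟩ := exists_hinge_eventuallyEq_self s
    rw [hx, omega_eq_of_eventuallyEq h₁ h₂, h]
  · obtain ⟨a, b, h⟩ := hinge_eventuallyEq_of_ne hx
    exact omega_eq_zero_of_eventuallyEq h

end Hinge

noncomputable def poleHingeSum (f : ℝ → ℝ) (y : ℝ) : ℝ := ∑ᶠ s, (omega f s)⁻ * hinge s y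

section PoleHingeSum

variable {f : ℝ → ℝ}

theorem locallyFinite_support_negPart_omega_mul_hinge (hf : TropMero f) :
    LocallyFinite fun s => Function.support fun y => (omega f s)⁻ * hinge s y := by
  intro x
  set R := |x| + 1
  refine ⟨Ioo (-R) R, Ioo_mem_nhds (by linarith [neg_abs_le x]) (by linarith [le_abs_self x]),
    (hf.finite_omega_ne_zero (isCompact_Icc (a := -R) (b := R))).subset ?_⟩
  rintro s ⟨y, hy, hyR⟩
  have hs : |s| < |y| := not_le.1 (mt hinge_eq_zero (right_ne_zero_of_mul hy))
  refine ⟨abs_le.1 (hs.trans (abs_lt.2 hyR)).le, fun h => left_ne_zero_of_mul hy ?_⟩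
  simp [h]

theorem poleHingeSum_eventuallyEq (hf : TropMero f) (x : ℝ) : ∃ T : Finset ℝ, x ∈ T ∧
    poleHingeSum f =ᶠ[𝓝 x] fun y => ∑ s ∈ T, (omega f s)⁻ * hinge s y := by
  classical
  obtain ⟨I, hI⟩ := (locallyFinite_support_negPart_omega_mul_hinge hf).exists_finset_support x
  refine ⟨insert x I, Finset.mem_insert_self x I, hI.mono fun y hy =>
    finsum_eq_sum_of_support_subset _ (hy.trans ?_)⟩
  exact Finset.coe_subset.2 (Finset.subset_insert x I)

theorem tropMero_poleHingeSum (hf : TropMero f) : TropMero (poleHingeSum f) :=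
  TropMero.of_eventuallyEq fun x =>
    let ⟨_, _, hT⟩ := poleHingeSum_eventuallyEq hf x
    ⟨_, TropMero.sum fun s _ => (tropMero_hinge s).const_mul _, hT⟩

theorem omega_poleHingeSum (hf : TropMero f) (x : ℝ) :
    omega (poleHingeSum f) x = (omega f x)⁻ := by
  obtain ⟨T, hxT, hT⟩ := poleHingeSum_eventuallyEq hf x
  rw [omega_congr hT, TropMero.omega_sum fun s _ => (tropMero_hinge s).const_mul _]
  simp [omega_const_mul, omega_hinge, hxT]

end PoleHingeSum

/-- Every tropical meromorphic function `f` can be written as `f = h − g` (tropically,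
`f = h ⊘ g`) where `g` and `h` are tropical entire functions with no common roots. -/
theorem tropMero_eq_quotient_of_entire (f : ℝ → ℝ) (hf : TropMero f) :
    ∃ g h : ℝ → ℝ, TropEntire g ∧ TropEntire h ∧ (∀ x, f x = h x - g x) ∧
      ¬ ∃ x : ℝ, 0 < omega g x ∧ 0 < omega h x := by
  set g := poleHingeSum f
  have hg : TropMero g := tropMero_poleHingeSum hf
  have hωg (x : ℝ) : omega g x = (omega f x)⁻ := omega_poleHingeSum hf x
  have hωh (x : ℝ) : omega (fun y => f y + g y) x = (omega f x)⁺ := by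
    rw [hf.omega_add hg, hωg]
    linarith [posPart_sub_negPart (omega f x)]
  refine ⟨g, fun y => f y + g y,
    ⟨hg, hg.convexOn_of_omega_nonneg fun x => hωg x ▸ negPart_nonneg _⟩,
    ⟨hf.add hg, (hf.add hg).convexOn_of_omega_nonneg fun x => hωh x ▸ posPart_nonneg _⟩,
    fun x => by ring, ?_⟩
  rintro ⟨x, hgx, hhx⟩
  rw [hωg, negPart_pos_iff] at hgx
  rw [hωh, posPart_pos_iff] at hhx
  exact hgx.not_gt hhx
end

section
/- Let f = h − g be a tropical meromorphic function with f(0) = 0, where g and h are tropical entire functions without common roots. Then the tropical Cartan characteristic of the curve [g : h] equals the tropical Nevanlinna characteristic of f: (F(r)+F(−r))/2 − F(0) = T(r, f) for all r ≥ 0, where F(x) = max{g(x), h(x)}. -/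
open Set Filter

/-! Write `f = h - g` and `F = max g h`. Since `h 0 = g 0` we have `F 0 = g 0`, and
`f⁺ = F - g`, so `m(r, f) = (F(r) + F(-r))/2 - (g(r) + g(-r))/2`. As `g` and `h` are convex
with no common roots, the poles of `f` are the roots of `g` with the same multiplicities, so
`n(t, f)` is the total jump of `g'` on `[-t, t]`, namely `g'₊(t) - g'₋(-t)`. Integrating,
`N(r, f) = (g(r) + g(-r))/2 - g(0)`, and adding `m(r, f)` gives the Cartan characteristic. -/

open Topology

theorem IsPreconnected.apply_eq_of_eventually_eq {α β : Type*} [TopologicalSpace α] {S : Set α}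
    (hS : IsPreconnected S) {G : α → β} (hG : ∀ x ∈ S, ∀ᶠ t in 𝓝[S] x, G t = G x) {x y : α}
    (hx : x ∈ S) (hy : y ∈ S) : G x = G y :=
  -- for the discrete topology on `β`, local constancy within `S` is continuity on `S`
  letI : TopologicalSpace β := ⊥
  haveI : DiscreteTopology β := ⟨rfl⟩
  hS.constant (fun z hz => by
    rw [ContinuousWithinAt, nhds_discrete, tendsto_pure]; exact hG z hz) hx hy

theorem finsum_mem_Ioc_add_finsum_mem_Ioc {α M : Type*} [LinearOrder α] [AddCommMonoid M]
    {φ : α → M} {a b c : α} (hab : a ≤ b) (hbc : b ≤ c) (hφ : (Ioc a c ∩ φ.support).Finite) :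
    ∑ᶠ s ∈ Ioc a b, φ s + ∑ᶠ s ∈ Ioc b c, φ s = ∑ᶠ s ∈ Ioc a c, φ s := by
  rw [← Ioc_union_Ioc_eq_Ioc hab hbc] at hφ ⊢
  exact (finsum_mem_union' (Ioc_disjoint_Ioc_of_le le_rfl)
    (hφ.subset (inter_subset_inter_left _ subset_union_left))
    (hφ.subset (inter_subset_inter_left _ subset_union_right))).symm

theorem derivWithin_Iio_eq_Iic (f : ℝ → ℝ) (x : ℝ) :
    derivWithin f (Iio x) x = derivWithin f (Iic x) x :=
  derivWithin_congr_set' x (by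
    filter_upwards [self_mem_nhdsWithin] with y (hy : y ≠ x)
    exact propext ⟨le_of_lt, fun h => h.lt_of_ne hy⟩)

theorem omega_eq_rightDeriv_sub_leftDeriv (f : ℝ → ℝ) (x : ℝ) :
    omega f x = derivWithin f (Ioi x) x - derivWithin f (Iio x) x := by
  rw [omega, derivWithin_Ioi_eq_Ici, derivWithin_Iio_eq_Iic]

theorem HasDerivAt.omega_eq_zero {f : ℝ → ℝ} {c x : ℝ} (hf : HasDerivAt f c x) :
    omega f x = 0 := by
  rw [omega, hf.hasDerivWithinAt.derivWithin (uniqueDiffWithinAt_Ici x),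
    hf.hasDerivWithinAt.derivWithin (uniqueDiffWithinAt_Iic x), sub_self]

theorem hasDerivWithinAt_of_eqOn_affine {f : ℝ → ℝ} {s t : Set ℝ} {a b y : ℝ}
    (hs : s ∈ 𝓝[t] y) (hy : y ∈ s) (hf : EqOn f (fun z => a * z + b) s) :
    HasDerivWithinAt f a t y := by
  simpa using (((hasDerivAt_id y).const_mul a).add_const b).hasDerivWithinAt.congr_of_eventuallyEq
    (eventually_of_mem hs hf) (hf hy)

namespace TropMero

variable {f : ℝ → ℝ}

theorem exists_slope_right (hf : TropMero f) (x : ℝ) :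
    ∃ a, ∃ u > x, HasDerivWithinAt f a (Ioi x) x ∧ ∀ y ∈ Ioo x u, HasDerivAt f a y := by
  obtain ⟨ε, hε, ⟨a, b, hab⟩, -⟩ := hf.2 x
  refine ⟨a, x + ε, by linarith, ?_, fun y hy => ?_⟩
  · exact (hasDerivWithinAt_of_eqOn_affine (Ico_mem_nhdsGE (by linarith))
      (left_mem_Ico.2 (by linarith)) hab).Ioi_of_Ici
  · exact hasDerivWithinAt_univ.1 <| hasDerivWithinAt_of_eqOn_affine
      (by simpa using Ioo_mem_nhds hy.1 hy.2) hy fun z hz => hab z (Ioo_subset_Ico_self hz)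

theorem exists_slope_left (hf : TropMero f) (x : ℝ) :
    ∃ a, ∃ l < x, HasDerivWithinAt f a (Iio x) x ∧ ∀ y ∈ Ioo l x, HasDerivAt f a y := by
  obtain ⟨ε, hε, -, ⟨a, b, hab⟩⟩ := hf.2 x
  refine ⟨a, x - ε, by linarith, ?_, fun y hy => ?_⟩
  · exact (hasDerivWithinAt_of_eqOn_affine (Ioc_mem_nhdsLE (by linarith))
      (right_mem_Ioc.2 (by linarith)) hab).Iio_of_Iic
  · exact hasDerivWithinAt_univ.1 <| hasDerivWithinAt_of_eqOn_affine
      (by simpa using Ioo_mem_nhds hy.1 hy.2) hy fun z hz => hab z (Ioo_subset_Ioc_self hz)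

theorem hasDerivWithinAt_Ioi (hf : TropMero f) (x : ℝ) :
    HasDerivWithinAt f (derivWithin f (Ioi x) x) (Ioi x) x := by
  obtain ⟨a, -, -, ha, -⟩ := hf.exists_slope_right x
  rwa [ha.derivWithin (uniqueDiffWithinAt_Ioi x)]

theorem hasDerivWithinAt_Iio (hf : TropMero f) (x : ℝ) :
    HasDerivWithinAt f (derivWithin f (Iio x) x) (Iio x) x := by
  obtain ⟨a, -, -, ha, -⟩ := hf.exists_slope_left x
  rwa [ha.derivWithin (uniqueDiffWithinAt_Iio x)]

theorem exists_hasDerivAt_Ioo_right (hf : TropMero f) (x : ℝ) :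
    ∃ u > x, ∀ y ∈ Ioo x u, HasDerivAt f (derivWithin f (Ioi x) x) y := by
  obtain ⟨a, u, hxu, ha, hu⟩ := hf.exists_slope_right x
  exact ⟨u, hxu, by rwa [ha.derivWithin (uniqueDiffWithinAt_Ioi x)]⟩

theorem exists_hasDerivAt_Ioo_left (hf : TropMero f) (x : ℝ) :
    ∃ l < x, ∀ y ∈ Ioo l x, HasDerivAt f (derivWithin f (Iio x) x) y := by
  obtain ⟨a, l, hlx, ha, hl⟩ := hf.exists_slope_left x
  exact ⟨l, hlx, by rwa [ha.derivWithin (uniqueDiffWithinAt_Iio x)]⟩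

theorem eventually_codiscrete_omega_eq_zero (hf : TropMero f) :
    ∀ᶠ y in codiscrete ℝ, omega f y = 0 := by
  refine mem_codiscrete.2 fun x => disjoint_principal_right.2 ?_
  obtain ⟨l, hlx, hl⟩ := hf.exists_hasDerivAt_Ioo_left x
  obtain ⟨u, hxu, hu⟩ := hf.exists_hasDerivAt_Ioo_right x
  rw [← nhdsLT_sup_nhdsGT, compl_compl]
  exact ⟨mem_of_superset (Ioo_mem_nhdsLT hlx) fun y hy => (hl y hy).omega_eq_zero,
    mem_of_superset (Ioo_mem_nhdsGT hxu) fun y hy => (hu y hy).omega_eq_zero⟩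

theorem finite_inter_support_omega (hf : TropMero f) {K : Set ℝ} (hK : IsCompact K) :
    (K ∩ (omega f).support).Finite :=
  hK.finite_sdiff_of_mem_codiscreteWithin
    (codiscreteWithin_mono (subset_univ K) hf.eventually_codiscrete_omega_eq_zero)

theorem finite_Ioc_inter_support_omega (hf : TropMero f) (a b : ℝ) :
    (Ioc a b ∩ (omega f).support).Finite :=
  (hf.finite_inter_support_omega isCompact_Icc).subset
    (inter_subset_inter_left _ Ioc_subset_Icc_self)

theorem eventually_rightDeriv_sub_finsum_omega (hf : TropMero f) {a x : ℝ} (hax : a ≤ x) :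
    ∀ᶠ t in 𝓝[Ici a] x, derivWithin f (Ioi t) t - ∑ᶠ s ∈ Ioc a t, omega f s =
      derivWithin f (Ioi x) x - ∑ᶠ s ∈ Ioc a x, omega f s := by
  obtain ⟨l, hlx, hl⟩ := hf.exists_hasDerivAt_Ioo_left x
  obtain ⟨u, hxu, hu⟩ := hf.exists_hasDerivAt_Ioo_right x
  filter_upwards [nhdsWithin_le_nhds (Ioo_mem_nhds hlx hxu), self_mem_nhdsWithin]
    with t ⟨hlt, htu⟩ (hat : a ≤ t)
  rcases lt_trichotomy t x with htx | rfl | hxt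
  · have hsum : ∑ᶠ s ∈ Ioc t x, omega f s = omega f x := by
      rw [← Ioo_union_right htx, finsum_mem_union' (disjoint_singleton_right.2 (by simp))
        ((hf.finite_Ioc_inter_support_omega t x).subset
          (inter_subset_inter_left _ Ioo_subset_Ioc_self))
        ((finite_singleton x).inter_of_left _), finsum_mem_singleton,
        finsum_mem_of_eqOn_zero fun s hs => (hl s ⟨hlt.trans hs.1, hs.2⟩).omega_eq_zero, zero_add]
    rw [← finsum_mem_Ioc_add_finsum_mem_Ioc hat htx.le (hf.finite_Ioc_inter_support_omega a x),
      hsum, omega_eq_rightDeriv_sub_leftDeriv,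
      (hl t ⟨hlt, htx⟩).hasDerivWithinAt.derivWithin (uniqueDiffWithinAt_Ioi t)]
    ring
  · rfl
  · have hsum : ∑ᶠ s ∈ Ioc x t, omega f s = 0 :=
      finsum_mem_of_eqOn_zero fun s hs => (hu s ⟨hs.1, hs.2.trans_lt htu⟩).omega_eq_zero
    rw [← finsum_mem_Ioc_add_finsum_mem_Ioc hax hxt.le (hf.finite_Ioc_inter_support_omega a t),
      hsum, add_zero,
      (hu t ⟨hxt, htu⟩).hasDerivWithinAt.derivWithin (uniqueDiffWithinAt_Ioi t)]

theorem finsum_omega_Ioc (hf : TropMero f) {a b : ℝ} (hab : a ≤ b) :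
    ∑ᶠ s ∈ Ioc a b, omega f s = derivWithin f (Ioi b) b - derivWithin f (Ioi a) a := by
  have := isPreconnected_Ici.apply_eq_of_eventually_eq
    (fun x hx => hf.eventually_rightDeriv_sub_finsum_omega hx) (self_mem_Ici (a := a)) hab
  rw [Ioc_self, finsum_mem_empty] at this
  linarith

theorem finsum_omega_Icc (hf : TropMero f) {a b : ℝ} (hab : a ≤ b) :
    ∑ᶠ s ∈ Icc a b, omega f s = derivWithin f (Ioi b) b - derivWithin f (Iio a) a := by
  rw [← Ioc_union_left hab, finsum_mem_union' (disjoint_singleton_right.2 (by simp))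
    (hf.finite_Ioc_inter_support_omega a b) ((finite_singleton a).inter_of_left _),
    finsum_mem_singleton, hf.finsum_omega_Ioc hab,
    omega_eq_rightDeriv_sub_leftDeriv]
  ring

theorem omega_sub {g : ℝ → ℝ} (hf : TropMero f) (hg : TropMero g) (x : ℝ) :
    omega (fun y => f y - g y) x = omega f x - omega g x := by
  simp only [omega_eq_rightDeriv_sub_leftDeriv,
    derivWithin_fun_sub (hf.hasDerivWithinAt_Ioi x).differentiableWithinAt
      (hg.hasDerivWithinAt_Ioi x).differentiableWithinAt,
    derivWithin_fun_sub (hf.hasDerivWithinAt_Iio x).differentiableWithinAt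
      (hg.hasDerivWithinAt_Iio x).differentiableWithinAt]
  ring

end TropMero

namespace ConvexOn

variable {g : ℝ → ℝ}

theorem omega_nonneg (hg : ConvexOn ℝ univ g) (x : ℝ) : 0 ≤ omega g x := by
  rw [omega_eq_rightDeriv_sub_leftDeriv, sub_nonneg]
  exact hg.leftDeriv_le_rightDeriv_of_mem_interior (by simp)

theorem monotone_rightDeriv (hg : ConvexOn ℝ univ g) :
    Monotone fun x => derivWithin g (Ioi x) x := by
  simpa using hg.monotoneOn_rightDeriv

theorem monotone_leftDeriv (hg : ConvexOn ℝ univ g) :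
    Monotone fun x => derivWithin g (Iio x) x := by
  simpa using hg.monotoneOn_leftDeriv

theorem integral_rightDeriv (hg : ConvexOn ℝ univ g) (a b : ℝ) :
    ∫ t in a..b, derivWithin g (Ioi t) t = g b - g a :=
  intervalIntegral.integral_eq_sub_of_hasDeriv_right
    ((hg.continuousOn isOpen_univ).mono (subset_univ _))
    (fun _ _ => hg.hasDerivWithinAt_rightDeriv_of_mem_interior (by simp))
    (hg.monotone_rightDeriv.intervalIntegrable)

theorem integral_leftDeriv_neg (hg : ConvexOn ℝ univ g) (a b : ℝ) :
    ∫ t in a..b, derivWithin g (Iio (-t)) (-t) = g (-a) - g (-b) := by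
  have hg' : ConvexOn ℝ univ fun x => g (-x) := hg.comp_linearMap (-LinearMap.id)
  have hreflect (t : ℝ) :
      derivWithin g (Iio (-t)) (-t) = -derivWithin (fun x => g (-x)) (Ioi t) t := by
    rw [derivWithin_comp_neg, neg_Ioi, neg_neg]
  simp_rw [hreflect, intervalIntegral.integral_neg, hg'.integral_rightDeriv]
  ring

theorem integral_rightDeriv_sub_leftDeriv_neg (hg : ConvexOn ℝ univ g) (r : ℝ) :
    ∫ t in (0 : ℝ)..r, (derivWithin g (Ioi t) t - derivWithin g (Iio (-t)) (-t)) =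
      g r + g (-r) - 2 * g 0 := by
  have hanti : Antitone fun t => derivWithin g (Iio (-t)) (-t) :=
    fun _ _ hst => hg.monotone_leftDeriv (neg_le_neg hst)
  rw [intervalIntegral.integral_sub hg.monotone_rightDeriv.intervalIntegrable
    hanti.intervalIntegrable,
    hg.integral_rightDeriv, hg.integral_leftDeriv_neg, neg_zero]
  ring

end ConvexOn

section Characteristic

variable {g h : ℝ → ℝ}

theorem nCount_sub_eq_finsum_omega (hg : TropEntire g) (hh : TropEntire h)
    (hcommon : ¬ ∃ x : ℝ, 0 < omega g x ∧ 0 < omega h x) (t : ℝ) :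
    nCount (fun x => h x - g x) t = ∑ᶠ s ∈ Icc (-t) t, omega g s := by
  have hω (s : ℝ) : omega (fun x => h x - g x) s = omega h s - omega g s := hh.1.omega_sub hg.1 s
  have hroot_g (s : ℝ) (hs : omega g s ≠ 0) : 0 < omega g s := (hg.2.omega_nonneg s).lt_of_ne' hs
  have hroot_h (s : ℝ) (hs : omega g s ≠ 0) : omega h s = 0 :=
    ((hh.2.omega_nonneg s).lt_or_eq.resolve_left fun hpos => hcommon ⟨s, hroot_g s hs, hpos⟩).symm
  rw [nCount, ← finsum_mem_inter_support (omega g) (Icc (-t) t)]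
  refine finsum_mem_congr (ext fun s => ?_) fun s ⟨_, hs⟩ => ?_
  · by_cases hs : omega g s = 0
    · simp [hω, hs, hh.2.omega_nonneg s]
    · simp [hω, hs, hroot_h s hs, hroot_g s hs, abs_le]
  · rw [hω, hroot_h s hs, zero_sub, abs_neg, abs_of_pos (hroot_g s hs)]

theorem NCount_sub_eq (hg : TropEntire g) (hh : TropEntire h)
    (hcommon : ¬ ∃ x : ℝ, 0 < omega g x ∧ 0 < omega h x) {r : ℝ} (hr : 0 ≤ r) :
    NCount (fun x => h x - g x) r = (g r + g (-r)) / 2 - g 0 := by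
  have hn : EqOn (nCount fun x => h x - g x)
      (fun t => derivWithin g (Ioi t) t - derivWithin g (Iio (-t)) (-t)) (uIcc 0 r) := by
    intro t ht
    rw [uIcc_of_le hr] at ht
    rw [nCount_sub_eq_finsum_omega hg hh hcommon, hg.1.finsum_omega_Icc (by linarith [ht.1])]
  rw [NCount, intervalIntegral.integral_congr hn, hg.2.integral_rightDeriv_sub_leftDeriv_neg]
  ring

end Characteristic

/-- If `f = h − g` is a tropical meromorphic function with `f(0) = 0`, where `g` and `h`
are tropical entire functions without common roots, then the tropical Cartan
characteristic of the curve `[g : h]` equals the tropical Nevanlinna characteristic of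
`f`: with `F(x) = max {g(x), h(x)}`, `(F(r)+F(−r))/2 − F(0) = T(r, f)` for all `r ≥ 0`. -/
theorem cartan_eq_nevanlinna_characteristic (g h : ℝ → ℝ)
    (hg : TropEntire g) (hh : TropEntire h)
    (hcommon : ¬ ∃ x : ℝ, 0 < omega g x ∧ 0 < omega h x)
    (hnorm : h 0 - g 0 = 0) :
    ∀ r : ℝ, 0 ≤ r →
      (max (g r) (h r) + max (g (-r)) (h (-r))) / 2 - max (g 0) (h 0) =
        Tchar (fun x => h x - g x) r := by
  intro r hr
  have hplus (x : ℝ) : max (h x - g x) 0 = max (g x) (h x) - g x := by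
    rw [max_comm (g x), ← max_sub_sub_right, sub_self]
  have hF0 : max (g 0) (h 0) = g 0 := by rw [sub_eq_zero.1 hnorm, max_self]
  rw [Tchar, mProx, NCount_sub_eq hg hh hcommon hr, hplus, hplus, hF0]
  ring
end
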